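/- For all finite simple graphs G and H, the vector chromatic number of their categorical product satisfies χ_v(G × H) = min{χ_v(G), χ_v(H)}. -/

import Mathlib

open Matrix Kronecker

noncomputable section VectorColoring

variable {V α β : Type*}

/-- A vector `t`-coloring of a graph `G`: vectors `p i` with `p i ⬝ᵥ p i = t - 1`
and `p i ⬝ᵥ p j ≤ -1` on edges. -/
def IsVecColoring [Fintype V] (G : SimpleGraph V) (t : ℝ) {d : ℕ}
    (p : V → Fin d → ℝ) : Prop :=
  (∀ i, p i ⬝ᵥ p i = t - 1) ∧ ∀ i j, G.Adj i j → p i ⬝ᵥ p j ≤ -1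

/-- The vector chromatic number: the least `t ≥ 1` admitting a vector `t`-coloring. -/
def vecChrom [Fintype V] (G : SimpleGraph V) : ℝ :=
  sInf {t : ℝ | 1 ≤ t ∧ ∃ (d : ℕ) (p : V → Fin d → ℝ), IsVecColoring G t p}

/-- A strict vector `t`-coloring: `p i ⬝ᵥ p j = -1` on edges. -/
def IsStrictVecColoring [Fintype V] (G : SimpleGraph V) (t : ℝ) {d : ℕ}
    (p : V → Fin d → ℝ) : Prop :=
  (∀ i, p i ⬝ᵥ p i = t - 1) ∧ ∀ i j, G.Adj i j → p i ⬝ᵥ p j = -1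

/-- The strict vector chromatic number. -/
def strictVecChrom [Fintype V] (G : SimpleGraph V) : ℝ :=
  sInf {t : ℝ | 1 ≤ t ∧ ∃ (d : ℕ) (p : V → Fin d → ℝ), IsStrictVecColoring G t p}

/-- The Gram matrix of a family of vectors. -/
def gramMat {d : ℕ} (p : V → Fin d → ℝ) : Matrix V V ℝ :=
  Matrix.of fun i j => p i ⬝ᵥ p j

/-- `M` is the Gram matrix of an optimal vector coloring of `G`. -/
def IsOptGram [Fintype V] (G : SimpleGraph V) (M : Matrix V V ℝ) : Prop :=
  ∃ (d : ℕ) (p : V → Fin d → ℝ), IsVecColoring G (vecChrom G) p ∧ M = gramMat p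

/-- `grk G = rk(G)`: the maximum rank of the Gram matrix of an optimal vector coloring. -/
def grk [Fintype V] (G : SimpleGraph V) : ℕ :=
  sSup {r : ℕ | ∃ M : Matrix V V ℝ, IsOptGram G M ∧ M.rank = r}

/-- The categorical (tensor) product of graphs. -/
def catProd (G : SimpleGraph α) (H : SimpleGraph β) : SimpleGraph (α × β) where
  Adj x y := G.Adj x.1 y.1 ∧ H.Adj x.2 y.2
  symm := ⟨by intro x y hxy; exact ⟨hxy.1.symm, hxy.2.symm⟩⟩
  loopless := ⟨by intro x hx; exact G.loopless.irrefl x.1 hx.1⟩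

/-- A feasible dual solution for `vecChrom G`. -/
def IsDualSol [Fintype V] (G : SimpleGraph V) (B : Matrix V V ℝ) : Prop :=
  B.PosSemidef ∧ (∀ i j, i ≠ j → ¬ G.Adj i j → B i j = 0) ∧
    (∀ i j, 0 ≤ B i j) ∧ B.trace = 1

/-- An optimal dual solution for `vecChrom G`: feasible with objective value `vecChrom G`. -/
def IsOptDual [Fintype V] (G : SimpleGraph V) (B : Matrix V V ℝ) : Prop :=
  IsDualSol G B ∧ (∑ i, ∑ j, B i j) = vecChrom G

/-- The all-ones matrix `J`. -/
def allOnes (γ : Type*) : Matrix γ γ ℝ :=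
  Matrix.of fun _ _ => 1

/-- The graph `G(B)` of a (symmetric) matrix `B`: distinct `i, j` adjacent iff `B i j ≠ 0`. -/
def matGraph (B : Matrix V V ℝ) : SimpleGraph V where
  Adj i j := i ≠ j ∧ B i j ≠ 0 ∧ B j i ≠ 0
  symm := ⟨by intro i j hij; exact ⟨hij.1.symm, hij.2.2, hij.2.1⟩⟩
  loopless := ⟨by intro i hi; exact hi.1 rfl⟩

/-- The spanning subgraph `G^p` of edges tight in the vector coloring `p`. -/
def tightSub [Fintype V] (G : SimpleGraph V) {d : ℕ} (p : V → Fin d → ℝ) :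
    SimpleGraph V where
  Adj i j := G.Adj i j ∧ p i ⬝ᵥ p j = -1
  symm := ⟨by
    intro i j hij
    exact ⟨hij.1.symm, by rw [dotProduct_comm]; exact hij.2⟩⟩
  loopless := ⟨by intro i hi; exact G.loopless.irrefl i hi.1⟩

/-- The skeleton `G^sk`: the spanning subgraph of edges tight in every optimal
vector coloring. -/
def skeleton [Fintype V] (G : SimpleGraph V) : SimpleGraph V where
  Adj i j := G.Adj i j ∧ ∀ (d : ℕ) (p : V → Fin d → ℝ),
      IsVecColoring G (vecChrom G) p → p i ⬝ᵥ p j = -1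
  symm := ⟨by
    intro i j hij
    refine ⟨hij.1.symm, fun d p hp => ?_⟩
    rw [dotProduct_comm]
    exact hij.2 d p hp⟩
  loopless := ⟨by intro i hi; exact G.loopless.irrefl i hi.1⟩

/-- `i` is neighborly in the vector coloring `p`: `-p i` lies in the conical hull of
the vectors of the `∼_p`-neighbours of `i`. -/
def NeighborlyIn [Fintype V] (G : SimpleGraph V) {d : ℕ} (p : V → Fin d → ℝ)
    (i : V) : Prop :=
  ∃ c : V → ℝ, (∀ j, 0 ≤ c j) ∧ (∀ j, c j ≠ 0 → G.Adj i j ∧ p i ⬝ᵥ p j = -1) ∧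
    -p i = ∑ j, c j • p j

/-- `i` is neighborly: neighborly in every optimal vector coloring. -/
def Neighborly [Fintype V] (G : SimpleGraph V) (i : V) : Prop :=
  ∀ (d : ℕ) (p : V → Fin d → ℝ), IsVecColoring G (vecChrom G) p → NeighborlyIn G p i

/-- `i →_p j`: `-p i = ∑ α_l • p l` over `∼_p`-neighbours `l` of `i`, with `α_j > 0`. -/
def ArrowIn [Fintype V] (G : SimpleGraph V) {d : ℕ} (p : V → Fin d → ℝ)
    (i j : V) : Prop :=
  ∃ c : V → ℝ, (∀ l, 0 ≤ c l) ∧ (∀ l, c l ≠ 0 → G.Adj i l ∧ p i ⬝ᵥ p l = -1) ∧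
    0 < c j ∧ -p i = ∑ l, c l • p l

/-- `μ` is an eigenvalue of `M`. -/
def IsEigenvalue [Fintype V] (M : Matrix V V ℝ) (μ : ℝ) : Prop :=
  ∃ v : V → ℝ, v ≠ 0 ∧ M *ᵥ v = μ • v

/-- `lam` is the largest eigenvalue of `M`. -/
def IsMaxEigenvalue [Fintype V] (M : Matrix V V ℝ) (lam : ℝ) : Prop :=
  IsGreatest {μ : ℝ | IsEigenvalue M μ} lam

/-- `lam` is the smallest eigenvalue of `M`. -/
def IsMinEigenvalue [Fintype V] (M : Matrix V V ℝ) (lam : ℝ) : Prop :=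
  IsLeast {μ : ℝ | IsEigenvalue M μ} lam

/-- The eigenspace of `M` for `μ`. -/
def eigSpace [Fintype V] (M : Matrix V V ℝ) (μ : ℝ) : Submodule ℝ (V → ℝ) :=
  LinearMap.ker (M.mulVecLin - μ • (LinearMap.id : (V → ℝ) →ₗ[ℝ] V → ℝ))

/-- `W` is (the Gram matrix of) a convex combination of vector colorings of `G × H`
induced by `G` and by `H`: `W = a • (M ⊗ J) + b • (J ⊗ N)`. -/
def IsConvexCombInduced [Fintype α] [Fintype β] (G : SimpleGraph α) (H : SimpleGraph β)
    (W : Matrix (α × β) (α × β) ℝ) : Prop :=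
  ∃ (a b : ℝ) (M : Matrix α α ℝ) (N : Matrix β β ℝ),
    0 ≤ a ∧ 0 ≤ b ∧ a + b = 1 ∧ IsOptGram G M ∧ IsOptGram H N ∧
    W = a • (M ⊗ₖ allOnes β) + b • (allOnes α ⊗ₖ N)

end VectorColoring

/-!
A vector coloring of `G` pulled back along the projection `G × H → G` is one of `G × H`, so
`χ_v(G × H) ≤ min (χ_v(G), χ_v(H))`.

The reverse inequality is proved through semidefinite duality: `χ_v(G)` is the maximum of `∑ B`
over dual solutions `B` (PSD, entrywise nonnegative, supported on the diagonal and the edges, of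
trace one). For every dual solution `B` and every vector `t`-coloring, `t • Diag(B) - B` is PSD, as
one sees by comparing its quadratic form at `x` with that of `B` on the Gram matrix of the vectors
`|xᵢ| • pᵢ`; by closedness this persists at `t = χ_v(G)`. With `A_B = B - Diag(B)`, optimal `B` and
`C` for `G` and `H`, and `c = max (χ_v(G) - 1) (χ_v(H) - 1)`, the matrix
`Diag(B) ⊗ Diag(C) + c⁻¹ • A_B ⊗ A_C` is then a dual solution for `G × H` of value
`1 + (χ_v(G) - 1) (χ_v(H) - 1) / c = min (χ_v(G), χ_v(H))`.
Strong duality comes from separating `χ_v(G) • 1 - J` from an open convex cone.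
-/

open Finset Filter Topology

section VecChromCatProd

variable {α β : Type*}

lemma dotProduct_mulVec_self_eq_sum [Fintype α] (M : Matrix α α ℝ) (x : α → ℝ) :
    x ⬝ᵥ M *ᵥ x = ∑ i, ∑ j, M i j * x i * x j := by
  simp only [dotProduct, mulVec, mul_sum]
  exact sum_congr rfl fun i _ => sum_congr rfl fun j _ => by ring

lemma Matrix.PosSemidef.sum_mul_dotProduct_nonneg [Fintype α] {B : Matrix α α ℝ}
    (hB : B.PosSemidef) {d : ℕ} (p : α → Fin d → ℝ) : 0 ≤ ∑ i, ∑ j, B i j * (p i ⬝ᵥ p j) := by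
  have h : ∑ i, ∑ j, B i j * (p i ⬝ᵥ p j) = ∑ k, (fun i => p i k) ⬝ᵥ B *ᵥ (fun i => p i k) :=
    calc ∑ i, ∑ j, B i j * (p i ⬝ᵥ p j)
        = ∑ i, ∑ j, ∑ k, p i k * (B i j * p j k) := by
          simp only [dotProduct, mul_sum]
          exact sum_congr rfl fun i _ => sum_congr rfl fun j _ => sum_congr rfl fun k _ => by ring
      _ = ∑ i, ∑ k, ∑ j, p i k * (B i j * p j k) := sum_congr rfl fun i _ => sum_comm
      _ = ∑ k, ∑ i, ∑ j, p i k * (B i j * p j k) := sum_comm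
      _ = _ := by simp only [dotProduct, mulVec, mul_sum]
  rw [h]
  exact sum_nonneg fun k _ => by simpa using hB.dotProduct_mulVec_nonneg fun i => p i k

lemma exists_dotProduct_eq_of_posSemidef [Fintype α] {M : Matrix α α ℝ} (hM : M.PosSemidef) :
    ∃ (d : ℕ) (p : α → Fin d → ℝ), ∀ i j, p i ⬝ᵥ p j = M i j := by
  obtain ⟨d, v, rfl⟩ := posSemidef_iff_eq_sum_vecMulVec.mp hM
  exact ⟨d, fun i k => v k i, fun i j => by simp [dotProduct, Matrix.sum_apply, vecMulVec_apply]⟩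

section VecColorableSet

variable [Fintype α] {G : SimpleGraph α}

def vecColorableSet (G : SimpleGraph α) : Set ℝ :=
  {t | 1 ≤ t ∧ ∃ (d : ℕ) (p : α → Fin d → ℝ), IsVecColoring G t p}

lemma mem_vecColorableSet_of_posSemidef {M : Matrix α α ℝ} {t : ℝ} (ht : 1 ≤ t)
    (hM : M.PosSemidef) (hdiag : ∀ i, M i i = t - 1) (hadj : ∀ i j, G.Adj i j → M i j ≤ -1) :
    t ∈ vecColorableSet G := by
  obtain ⟨d, p, hp⟩ := exists_dotProduct_eq_of_posSemidef hM
  exact ⟨ht, d, p, fun i => (hp i i).trans (hdiag i), fun i j h => (hp i j).trans_le (hadj i j h)⟩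

lemma vecColorableSet_nonempty (G : SimpleGraph α) : (vecColorableSet G).Nonempty := by
  classical
  set n : ℝ := (Fintype.card α : ℝ)
  have hdeg (i : α) : (G.degree i : ℝ) ≤ n := Nat.cast_le.mpr (G.degree_lt_card_verts i).le
  have hM : diagonal (fun _ => n) - G.adjMatrix ℝ =
      G.lapMatrix ℝ + diagonal fun i => n - G.degree i := by
    ext i j
    by_cases hij : i = j <;> simp [SimpleGraph.lapMatrix, SimpleGraph.degMatrix, hij]
  refine ⟨n + 1, mem_vecColorableSet_of_posSemidef (M := diagonal (fun _ => n) - G.adjMatrix ℝ)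
    (by simp [n]) ?_ (fun i => by simp) (fun i j h => by simp [h, G.ne_of_adj h])⟩
  rw [hM]
  exact (G.posSemidef_lapMatrix ℝ).add (PosSemidef.diagonal fun i => sub_nonneg.mpr (hdeg i))

lemma bddBelow_vecColorableSet (G : SimpleGraph α) : BddBelow (vecColorableSet G) :=
  ⟨1, fun _ ht => ht.1⟩

lemma one_le_vecChrom (G : SimpleGraph α) : 1 ≤ vecChrom G :=
  le_csInf (vecColorableSet_nonempty G) fun _ ht => ht.1

lemma vecChrom_le_of_mem {t : ℝ} (ht : t ∈ vecColorableSet G) : vecChrom G ≤ t :=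
  csInf_le (bddBelow_vecColorableSet G) ht

lemma vecChrom_mem_closure (G : SimpleGraph α) : vecChrom G ∈ closure (vecColorableSet G) :=
  csInf_mem_closure (vecColorableSet_nonempty G) (bddBelow_vecColorableSet G)

lemma nonempty_of_one_lt_vecChrom (h : 1 < vecChrom G) : Nonempty α := by
  by_contra hα
  rw [not_nonempty_iff] at hα
  have : (1 : ℝ) ∈ vecColorableSet G := ⟨le_rfl, 0, fun _ => 0, isEmptyElim, isEmptyElim⟩
  exact (vecChrom_le_of_mem this).not_gt h

end VecColorableSet

namespace IsDualSol

variable [Fintype α] {G : SimpleGraph α} {B : Matrix α α ℝ}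

lemma mul_dotProduct_le_neg (hB : IsDualSol G B) {t : ℝ} {d : ℕ} {p : α → Fin d → ℝ}
    (hp : IsVecColoring G t p) {i j : α} (hij : i ≠ j) : B i j * (p i ⬝ᵥ p j) ≤ -B i j := by
  obtain ⟨-, hsupp, hnonneg, -⟩ := hB
  by_cases hadj : G.Adj i j
  · nlinarith [hnonneg i j, hp.2 i j hadj]
  · simp [hsupp i j hij hadj]

lemma isHermitian_smul_diagonal_sub [DecidableEq α] (hB : IsDualSol G B) (t : ℝ) :
    (t • diagonal B.diag - B).IsHermitian :=
  ((isHermitian_diagonal _).smul (IsSelfAdjoint.all t)).sub hB.1.1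

lemma posSemidef_smul_diagonal_sub [DecidableEq α] (hB : IsDualSol G B) {t : ℝ} {d : ℕ}
    {p : α → Fin d → ℝ} (hp : IsVecColoring G t p) : (t • diagonal B.diag - B).PosSemidef := by
  refine PosSemidef.of_dotProduct_mulVec_nonneg (hB.isHermitian_smul_diagonal_sub t) fun x => ?_
  rw [star_trivial, dotProduct_mulVec_self_eq_sum]
  refine (hB.1.sum_mul_dotProduct_nonneg fun i => |x i| • p i).trans
    (sum_le_sum fun i _ => sum_le_sum fun j _ => ?_)
  simp only [dotProduct_smul, smul_dotProduct, smul_eq_mul, Matrix.sub_apply, Matrix.smul_apply,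
    diagonal_apply, diag_apply]
  rcases eq_or_ne i j with rfl | hij
  · simp only [hp.1 i, if_true]
    exact le_of_eq (by linear_combination (t - 1) * B i i * abs_mul_abs_self (x i))
  · simp only [hij, if_false, mul_zero, zero_sub]
    have h := hB.mul_dotProduct_le_neg hp hij
    nlinarith [hB.2.2.1 i j, le_abs_self (x i * x j), abs_mul (x i) (x j),
      mul_le_mul_of_nonneg_left h (mul_nonneg (abs_nonneg (x i)) (abs_nonneg (x j)))]

lemma sum_le (hB : IsDualSol G B) {t : ℝ} {d : ℕ} {p : α → Fin d → ℝ}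
    (hp : IsVecColoring G t p) : ∑ i, ∑ j, B i j ≤ t := by
  classical
  have h := (hB.posSemidef_smul_diagonal_sub hp).dotProduct_mulVec_nonneg 1
  have htr : ∑ i, B i i = 1 := hB.2.2.2
  simp only [star_trivial, dotProduct_mulVec_self_eq_sum, Pi.one_apply, mul_one, Matrix.sub_apply,
    Matrix.smul_apply, diagonal_apply, diag_apply, smul_eq_mul, sum_sub_distrib, mul_ite,
    mul_zero, sum_ite_eq, mem_univ, if_true, ← mul_sum, htr] at h
  linarith

lemma sum_le_vecChrom (hB : IsDualSol G B) : ∑ i, ∑ j, B i j ≤ vecChrom G :=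
  le_csInf (vecColorableSet_nonempty G) fun _ ⟨_, _, _, hp⟩ => hB.sum_le hp

lemma posSemidef_vecChrom_smul_diagonal_sub [DecidableEq α] (hB : IsDualSol G B) :
    (vecChrom G • diagonal B.diag - B).PosSemidef := by
  refine PosSemidef.of_dotProduct_mulVec_nonneg (hB.isHermitian_smul_diagonal_sub _) fun x => ?_
  have hclosed : IsClosed {t : ℝ | 0 ≤ star x ⬝ᵥ (t • diagonal B.diag - B) *ᵥ x} := by
    simp only [sub_mulVec, smul_mulVec, dotProduct_sub, dotProduct_smul, smul_eq_mul]
    exact isClosed_le continuous_const (by fun_prop)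
  refine closure_minimal ?_ hclosed (vecChrom_mem_closure G)
  rintro t ⟨-, _, _, hp⟩
  exact (hB.posSemidef_smul_diagonal_sub hp).dotProduct_mulVec_nonneg x

end IsDualSol

theorem exists_dual_nonneg_on_closure_of_notMem_cone {E : Type*} [AddCommGroup E] [Module ℝ E]
    [TopologicalSpace E] [IsTopologicalAddGroup E] [ContinuousSMul ℝ E] {V : Set E} {x : E}
    (hconv : Convex ℝ V) (hopen : IsOpen V) (hcone : ∀ a ∈ V, ∀ t : ℝ, 0 < t → t • a ∈ V)
    (hne : V.Nonempty) (hx : x ∉ V) :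
    ∃ f : StrongDual ℝ E, f ≠ 0 ∧ (∀ a ∈ closure V, 0 ≤ f a) ∧ f x ≤ 0 := by
  obtain ⟨g, hg⟩ := geometric_hahn_banach_open_point hconv hopen hx
  obtain ⟨a₀, ha₀⟩ := hne
  have hV : ∀ a ∈ V, g a ≤ 0 := by
    intro a ha
    by_contra! h
    have := hg _ (hcone a ha ((|g x| + 1) / g a) (by positivity))
    rw [map_smul, smul_eq_mul, div_mul_cancel₀ _ h.ne'] at this
    linarith [le_abs_self (g x)]
  have hx0 : 0 ≤ g x := by
    by_contra! h
    have ha₀x := hg a₀ ha₀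
    have := hg _ (hcone a₀ ha₀ (g x / g a₀) (div_pos_of_neg_of_neg h (ha₀x.trans h)))
    rw [map_smul, smul_eq_mul, div_mul_cancel₀ _ (ha₀x.trans h).ne] at this
    exact this.false
  refine ⟨-g, fun h => ?_, fun a ha => ?_, by simpa using hx0⟩
  · simpa [neg_eq_zero.mp h] using hg a₀ ha₀
  · exact closure_minimal (fun a ha => by simpa using hV a ha)
      (isClosed_le continuous_const (-g).continuous) ha

lemma StrongDual.apply_eq_sum_mul_single [Fintype α] [DecidableEq α]
    (f : StrongDual ℝ (Matrix α α ℝ)) (A : Matrix α α ℝ) :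
    f A = ∑ i, ∑ j, A i j * f (single i j 1) := by
  conv_lhs => rw [matrix_eq_sum_single A]
  simp only [map_sum]
  refine sum_congr rfl fun i _ => sum_congr rfl fun j _ => ?_
  rw [← smul_eq_mul, ← map_smul, smul_single, smul_eq_mul, mul_one]

section StrongDuality

variable {G : SimpleGraph α}

def primalCone (G : SimpleGraph α) : Set (Matrix α α ℝ) :=
  {A | ∃ M : Matrix α α ℝ, M.PosSemidef ∧ ∀ i j, (i = j ∨ G.Adj i j) → M i j < A i j}

lemma isOpen_primalCone [Fintype α] : IsOpen (primalCone G) := by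
  rw [isOpen_iff_mem_nhds]
  rintro A ⟨M, hM, hMA⟩
  have : ∀ᶠ A' in 𝓝 A, ∀ i j, (i = j ∨ G.Adj i j) → M i j < A' i j := by
    simp only [eventually_all]
    exact fun i j hij =>
      continuousAt_const.eventually_lt (continuous_apply_apply i j).continuousAt (hMA i j hij)
  exact this.mono fun A' h => ⟨M, hM, h⟩

lemma convex_primalCone : Convex ℝ (primalCone G) := by
  rintro A ⟨M, hM, hMA⟩ A' ⟨M', hM', hMA'⟩ a b ha hb hab
  refine ⟨a • M + b • M', (hM.smul ha).add (hM'.smul hb), fun i j hij => ?_⟩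
  simp only [Matrix.add_apply, Matrix.smul_apply, smul_eq_mul]
  rcases ha.eq_or_lt with rfl | ha
  · obtain rfl : b = 1 := by simpa using hab
    simpa using hMA' i j hij
  · nlinarith [hMA i j hij, hMA' i j hij]

lemma smul_mem_primalCone {A : Matrix α α ℝ} (hA : A ∈ primalCone G) {t : ℝ} (ht : 0 < t) :
    t • A ∈ primalCone G := by
  obtain ⟨M, hM, hMA⟩ := hA
  exact ⟨t • M, hM.smul ht.le, fun i j hij => by
    simpa using mul_lt_mul_of_pos_left (hMA i j hij) ht⟩

lemma mem_closure_primalCone {A M : Matrix α α ℝ} (hM : M.PosSemidef)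
    (hMA : ∀ i j, (i = j ∨ G.Adj i j) → M i j ≤ A i j) : A ∈ closure (primalCone G) := by
  have hlim : Tendsto (fun t : ℝ => A + t • allOnes α) (𝓝[>] 0) (𝓝 A) := by
    have : Continuous fun t : ℝ => A + t • allOnes α := by fun_prop
    simpa using (this.tendsto 0).mono_left nhdsWithin_le_nhds
  refine mem_closure_of_tendsto hlim (eventually_nhdsWithin_of_forall fun t (ht : 0 < t) => ?_)
  exact ⟨M, hM, fun i j hij => by
    simpa [allOnes] using (hMA i j hij).trans_lt (lt_add_of_pos_right _ ht)⟩

lemma smul_one_sub_allOnes_notMem_primalCone [Fintype α] [Nonempty α] [DecidableEq α] :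
    vecChrom G • 1 - allOnes α ∉ primalCone G := by
  rintro ⟨M, hM, hMA⟩
  obtain ⟨i₀, hi₀⟩ := Finite.exists_max fun i => M i i
  have hmem : M i₀ i₀ + 1 ∈ vecColorableSet G := by
    refine mem_vecColorableSet_of_posSemidef (M := M + diagonal fun i => M i₀ i₀ - M i i)
      (by linarith [hM.diag_nonneg (i := i₀)])
      (hM.add (PosSemidef.diagonal fun i => sub_nonneg.mpr (hi₀ i))) (fun i => by simp)
      (fun i j h => ?_)
    have := hMA i j (Or.inr h)
    simp_all [G.ne_of_adj h, allOnes]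
    linarith
  have := hMA i₀ i₀ (Or.inl rfl)
  simp only [Matrix.sub_apply, Matrix.smul_apply, one_apply_eq, allOnes, of_apply,
    smul_eq_mul] at this
  linarith [vecChrom_le_of_mem hmem]

variable [Fintype α]

theorem exists_dual_certificate [Nonempty α] :
    ∃ Y : Matrix α α ℝ, Y ≠ 0 ∧ (∀ i j, 0 ≤ Y i j) ∧ (∀ i j, i ≠ j → ¬ G.Adj i j → Y i j = 0) ∧
      (∀ x, 0 ≤ x ⬝ᵥ Y *ᵥ x) ∧ vecChrom G * Y.trace ≤ ∑ i, ∑ j, Y i j := by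
  classical
  obtain ⟨f, hf0, hfV, hfx⟩ := exists_dual_nonneg_on_closure_of_notMem_cone convex_primalCone
    isOpen_primalCone (fun _ hA _ ht => smul_mem_primalCone hA ht)
    ⟨allOnes α, 0, .zero, fun i j _ => by simp [allOnes]⟩
    (smul_one_sub_allOnes_notMem_primalCone (G := G))
  set Y : Matrix α α ℝ := of fun i j => f (single i j 1)
  have hf (A : Matrix α α ℝ) : f A = ∑ i, ∑ j, A i j * Y i j := f.apply_eq_sum_mul_single A
  have hY (i j : α) : 0 ≤ Y i j :=
    hfV _ (mem_closure_primalCone .zero fun k l _ => by simp [single_apply]; split_ifs <;> simp)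
  refine ⟨Y, fun h => hf0 (ContinuousLinearMap.ext fun A => by simp [hf, h]), hY,
    fun i j hij hadj => (hY i j).antisymm' ?_, fun x => ?_, ?_⟩
  · have hij' (k l : α) (hkl : k = l ∨ G.Adj k l) : ¬ (i = k ∧ j = l) := by
      rintro ⟨rfl, rfl⟩
      exact hkl.elim hij hadj
    simpa [Y] using hfV _ (mem_closure_primalCone (A := -single i j 1) .zero fun k l hkl => by
      simp [hij' k l hkl])
  · have := hfV _ (mem_closure_primalCone (posSemidef_vecMulVec_self_star x) fun _ _ _ => le_rfl)
    rwa [hf, ← sum_congr rfl fun i _ => sum_congr rfl fun j _ => by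
      rw [star_trivial, vecMulVec_apply, mul_comm, ← mul_assoc], ← dotProduct_mulVec_self_eq_sum]
      at this
  · rw [hf] at hfx
    simp only [Matrix.sub_apply, Matrix.smul_apply, one_apply, allOnes, of_apply, smul_eq_mul,
      mul_ite, mul_one, mul_zero, sub_mul, ite_mul, zero_mul, one_mul, sum_sub_distrib,
      sum_ite_eq, mem_univ, if_true] at hfx
    simp only [trace, diag_apply, mul_sum]
    linarith

lemma isDualSol_inv_trace_smul_add_transpose {Y : Matrix α α ℝ} (hY0 : Y ≠ 0)
    (hY : ∀ i j, 0 ≤ Y i j) (hsupp : ∀ i j, i ≠ j → ¬ G.Adj i j → Y i j = 0)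
    (hquad : ∀ x, 0 ≤ x ⬝ᵥ Y *ᵥ x) : IsDualSol G ((Y + Yᵀ).trace⁻¹ • (Y + Yᵀ)) := by
  have hZ : (Y + Yᵀ).PosSemidef := by
    refine PosSemidef.of_dotProduct_mulVec_nonneg (by simp [IsHermitian, add_comm]) fun x => ?_
    rw [star_trivial, add_mulVec, dotProduct_add, dotProduct_mulVec x Yᵀ, vecMul_transpose,
      dotProduct_comm (Y *ᵥ x) x]
    linarith [hquad x]
  have htr : 0 < (Y + Yᵀ).trace := by
    refine hZ.trace_nonneg.lt_of_ne fun h => hY0 ?_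
    ext i j
    have := congrFun (congrFun (hZ.trace_eq_zero_iff.mp h.symm) i) j
    simp only [Matrix.add_apply, transpose_apply, Matrix.zero_apply] at this ⊢
    linarith [hY i j, hY j i]
  refine ⟨hZ.smul (inv_nonneg.mpr htr.le), fun i j hij hadj => ?_, fun i j => ?_, ?_⟩
  · simp [hsupp i j hij hadj, hsupp j i hij.symm fun h => hadj h.symm]
  · simpa using mul_nonneg (inv_nonneg.mpr htr.le) (add_nonneg (hY i j) (hY j i))
  · rw [trace_smul, smul_eq_mul, inv_mul_cancel₀ htr.ne']

theorem exists_isDualSol_sum_eq_vecChrom [Nonempty α] :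
    ∃ B, IsDualSol G B ∧ ∑ i, ∑ j, B i j = vecChrom G := by
  obtain ⟨Y, hY0, hY, hsupp, hquad, hval⟩ := exists_dual_certificate (G := G)
  have hB := isDualSol_inv_trace_smul_add_transpose hY0 hY hsupp hquad
  refine ⟨_, hB, hB.sum_le_vecChrom.antisymm ?_⟩
  have hsym : vecChrom G * (Y + Yᵀ).trace ≤ ∑ i, ∑ j, (Y + Yᵀ) i j := by
    simp only [trace_add, trace_transpose, Matrix.add_apply, transpose_apply, sum_add_distrib]
    rw [sum_comm (f := fun i j => Y j i)]
    linarith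
  have hc : 0 ≤ (Y + Yᵀ).trace⁻¹ := by
    have : 0 ≤ Y.trace := sum_nonneg fun i _ => hY i i
    rw [trace_add, trace_transpose]
    positivity
  calc vecChrom G = vecChrom G * ((Y + Yᵀ).trace⁻¹ • (Y + Yᵀ)).trace := by rw [hB.2.2.2, mul_one]
    _ = (Y + Yᵀ).trace⁻¹ * (vecChrom G * (Y + Yᵀ).trace) := by rw [trace_smul, smul_eq_mul]; ring
    _ ≤ (Y + Yᵀ).trace⁻¹ * ∑ i, ∑ j, (Y + Yᵀ) i j := mul_le_mul_of_nonneg_left hsym hc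
    _ = ∑ i, ∑ j, ((Y + Yᵀ).trace⁻¹ • (Y + Yᵀ)) i j := by simp [mul_sum]

end StrongDuality

section ProductDual

lemma sub_diagonal_diag_apply [DecidableEq α] (B : Matrix α α ℝ) (i j : α) :
    (B - diagonal B.diag) i j = if i = j then 0 else B i j := by
  by_cases h : i = j <;> simp [h]

lemma sum_sum_diagonal_diag [Fintype α] [DecidableEq α] (B : Matrix α α ℝ) :
    ∑ i, ∑ j, diagonal B.diag i j = B.trace := by
  simp [trace, diagonal_apply]

lemma sum_sum_kronecker [Fintype α] [Fintype β] (X : Matrix α α ℝ) (Y : Matrix β β ℝ) :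
    ∑ u, ∑ v, (X ⊗ₖ Y) u v = (∑ i, ∑ j, X i j) * ∑ l, ∑ k, Y l k := by
  simp only [Fintype.sum_prod_type, kroneckerMap_apply, sum_mul_sum]

variable [DecidableEq α] [DecidableEq β]

noncomputable def productDual (B : Matrix α α ℝ) (C : Matrix β β ℝ) (c : ℝ) :
    Matrix (α × β) (α × β) ℝ :=
  diagonal B.diag ⊗ₖ diagonal C.diag + c⁻¹ • ((B - diagonal B.diag) ⊗ₖ (C - diagonal C.diag))

lemma productDual_apply (B : Matrix α α ℝ) (C : Matrix β β ℝ) (c : ℝ) (i j : α) (l k : β) :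
    productDual B C c (i, l) (j, k) =
      (if i = j then B i i else 0) * (if l = k then C l l else 0) +
        c⁻¹ * ((if i = j then 0 else B i j) * (if l = k then 0 else C l k)) := by
  simp only [productDual, Matrix.add_apply, Matrix.smul_apply, kroneckerMap_apply,
    sub_diagonal_diag_apply, diagonal_apply, diag_apply, smul_eq_mul]

variable [Fintype α] [Fintype β] {B : Matrix α α ℝ} {C : Matrix β β ℝ}

lemma sum_productDual (B : Matrix α α ℝ) (C : Matrix β β ℝ) (c : ℝ) :
    ∑ u, ∑ v, productDual B C c u v = B.trace * C.trace +
      c⁻¹ * ((∑ i, ∑ j, B i j - B.trace) * (∑ l, ∑ k, C l k - C.trace)) := by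
  simp only [productDual, Matrix.add_apply, Matrix.smul_apply, smul_eq_mul, sum_add_distrib,
    ← mul_sum, sum_sum_kronecker, Matrix.sub_apply, sum_sub_distrib, sum_sum_diagonal_diag]

theorem posSemidef_productDual {a b : ℝ} (ha : 0 ≤ a) (hb : 0 ≤ b) (hab : 0 < max a b)
    (hB : B.PosSemidef) (hB' : ((1 + a) • diagonal B.diag - B).PosSemidef)
    (hC : C.PosSemidef) (hC' : ((1 + b) • diagonal C.diag - C).PosSemidef) :
    (productDual B C (max a b)).PosSemidef := by
  set c := max a b
  set B' := (1 + a) • diagonal B.diag - B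
  set C' := (1 + b) • diagonal C.diag - C
  -- `diagonal B.diag = (B + B') / (1 + a)` and `B - diagonal B.diag = (a • B - B') / (1 + a)`;
  -- expanding gives coefficients that are nonnegative because `a, b ≤ c`.
  have hsum : ((1 + a) * (1 + b) * c) • productDual B C c =
      (c + a * b) • (B ⊗ₖ C) + (c - a) • (B ⊗ₖ C') + (c - b) • (B' ⊗ₖ C) +
        (c + 1) • (B' ⊗ₖ C') := by
    ext u v
    simp only [productDual, B', C', Matrix.add_apply, Matrix.smul_apply, Matrix.sub_apply,
      kroneckerMap_apply, smul_eq_mul]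
    field_simp
    ring
  have h := (((hB.kronecker hC).smul (by positivity : 0 ≤ c + a * b)).add
    ((hB.kronecker hC').smul (sub_nonneg.mpr (le_max_left a b)))).add
    ((hB'.kronecker hC).smul (sub_nonneg.mpr (le_max_right a b))) |>.add
    ((hB'.kronecker hC').smul (by linarith : 0 ≤ c + 1))
  rw [← hsum] at h
  have hpos : 0 < (1 + a) * (1 + b) * c := by positivity
  have := h.smul (inv_nonneg.mpr hpos.le)
  rwa [smul_smul, inv_mul_cancel₀ hpos.ne', one_smul] at this

variable {G : SimpleGraph α} {H : SimpleGraph β}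

theorem IsDualSol.productDual (hB : IsDualSol G B) (hC : IsDualSol H C) {c : ℝ} (hc : 0 < c)
    (hpsd : (productDual B C c).PosSemidef) : IsDualSol (catProd G H) (productDual B C c) := by
  obtain ⟨-, hBsupp, hBnonneg, hBtr⟩ := hB
  obtain ⟨-, hCsupp, hCnonneg, hCtr⟩ := hC
  refine ⟨hpsd, ?_, ?_, ?_⟩
  · rintro ⟨i, l⟩ ⟨j, k⟩ hne hadj
    rw [productDual_apply]
    rcases eq_or_ne i j with rfl | hij
    · have hlk : l ≠ k := fun h => hne (by rw [h])
      simp [hlk]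
    rcases eq_or_ne l k with rfl | hlk
    · simp [hij]
    rcases not_and_or.mp hadj with h | h
    · simp [hij, hlk, hBsupp i j hij h]
    · simp [hij, hlk, hCsupp l k hlk h]
  · rintro ⟨i, l⟩ ⟨j, k⟩
    rw [productDual_apply]
    have := hBnonneg i j
    have := hCnonneg l k
    have := hBnonneg i i
    have := hCnonneg l l
    have := hc.le
    split_ifs <;> positivity
  · have htrB : ∑ i, B i i = 1 := hBtr
    have htrC : ∑ l, C l l = 1 := hCtr
    simp [trace, Fintype.sum_prod_type, productDual_apply, ← sum_mul_sum, htrB, htrC]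

end ProductDual

section CatProdVecChrom

variable [Fintype α] [Fintype β] {G : SimpleGraph α} {H : SimpleGraph β}

lemma vecChrom_catProd_le_left : vecChrom (catProd G H) ≤ vecChrom G :=
  csInf_le_csInf (bddBelow_vecColorableSet _) (vecColorableSet_nonempty G)
    fun _ ⟨ht, d, p, hdiag, hadj⟩ =>
      ⟨ht, d, fun u => p u.1, fun u => hdiag u.1, fun _ _ huv => hadj _ _ huv.1⟩

lemma vecChrom_catProd_le_right : vecChrom (catProd G H) ≤ vecChrom H :=
  csInf_le_csInf (bddBelow_vecColorableSet _) (vecColorableSet_nonempty H)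
    fun _ ⟨ht, d, p, hdiag, hadj⟩ =>
      ⟨ht, d, fun u => p u.2, fun u => hdiag u.2, fun _ _ huv => hadj _ _ huv.2⟩

theorem min_vecChrom_le_vecChrom_catProd :
    min (vecChrom G) (vecChrom H) ≤ vecChrom (catProd G H) := by
  classical
  rcases le_or_gt (vecChrom G) 1 with hG | hG
  · exact (min_le_left _ _).trans (hG.trans (one_le_vecChrom _))
  rcases le_or_gt (vecChrom H) 1 with hH | hH
  · exact (min_le_right _ _).trans (hH.trans (one_le_vecChrom _))
  have := nonempty_of_one_lt_vecChrom hG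
  have := nonempty_of_one_lt_vecChrom hH
  obtain ⟨B, hB, hBG⟩ := exists_isDualSol_sum_eq_vecChrom (G := G)
  obtain ⟨C, hC, hCH⟩ := exists_isDualSol_sum_eq_vecChrom (G := H)
  set a := vecChrom G - 1
  set b := vecChrom H - 1
  have hab : 0 < max a b := lt_max_of_lt_left (by linarith)
  have hW := hB.productDual hC hab <| posSemidef_productDual (by linarith) (by linarith) hab
    hB.1 (by simpa [a] using hB.posSemidef_vecChrom_smul_diagonal_sub)
    hC.1 (by simpa [b] using hC.posSemidef_vecChrom_smul_diagonal_sub)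
  calc min (vecChrom G) (vecChrom H) = 1 + a * b / max a b := by
        rw [← min_mul_max a b, mul_div_cancel_right₀ _ hab.ne', min_sub_sub_right]; ring
    _ = ∑ u, ∑ v, productDual B C (max a b) u v := by
        rw [sum_productDual, hBG, hCH, hB.2.2.2, hC.2.2.2]; ring
    _ ≤ vecChrom (catProd G H) := hW.sum_le_vecChrom

end CatProdVecChrom

end VecChromCatProd

/-- Vector coloring analog of Hedetniemi's conjecture:
`χ_v(G × H) = min {χ_v(G), χ_v(H)}`. -/
theorem vecChrom_catProd {α β : Type*} [Fintype α] [Fintype β]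
    (G : SimpleGraph α) (H : SimpleGraph β) :
    vecChrom (catProd G H) = min (vecChrom G) (vecChrom H) :=
  le_antisymm (le_min vecChrom_catProd_le_left vecChrom_catProd_le_right)
    min_vecChrom_le_vecChrom_catProd
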